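/- arXiv:1512.02148 — 5 statements merged into one kernel-verified Lean document; each statement's English description precedes it below -/
import Mathlib

section
/- For A = diag(ω₁,…,ω_n,ω₁,…,ω_n) with ω₁²,…,ω_n² pairwise distinct and all nonzero, the kernel of the map M ↦ JAM − MAJ on symmetric 2n×2n matrices consists exactly of the diagonal matrices of the form diag(a₁,…,a_n,a₁,…,a_n). -/
open Matrix

/-- For `A = diag(ω₁,…,ω_n,ω₁,…,ω_n)` with the `ω_i` nonzero and
with pairwise distinct squares, the kernel of `M ↦ J*A*M - M*A*J` on symmetric
matrices consists exactly of the diagonal matrices `diag(a₁,…,a_n,a₁,…,a_n)`. -/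
theorem ker_chi_star (n : ℕ) (ω : Fin n → ℝ)
    (hω : ∀ i, ω i ≠ 0) (hω' : ∀ i j, i ≠ j → ω i ^ 2 ≠ ω j ^ 2)
    (J A : Matrix (Fin n ⊕ Fin n) (Fin n ⊕ Fin n) ℝ)
    (hJ : J = Matrix.fromBlocks 0 1 (-1) 0)
    (hA : A = Matrix.diagonal (Sum.elim ω ω))
    (M : Matrix (Fin n ⊕ Fin n) (Fin n ⊕ Fin n) ℝ) (hM : Mᵀ = M) :
    J * A * M - M * A * J = 0 ↔
      ∃ a : Fin n → ℝ, M = Matrix.diagonal (Sum.elim a a) := by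
  subst hJ hA
  have L1 : ∀ (i : Fin n) (q : Fin n ⊕ Fin n),
      ((Matrix.fromBlocks 0 1 (-1) 0 : Matrix (Fin n ⊕ Fin n) (Fin n ⊕ Fin n) ℝ) *
        Matrix.diagonal (Sum.elim ω ω) * M) (Sum.inl i) q = ω i * M (Sum.inr i) q := by
    intro i q
    rw [Matrix.mul_assoc, Matrix.mul_apply]
    simp [Matrix.mul_apply, Fintype.sum_sum_type, Matrix.fromBlocks, Matrix.diagonal,
      Matrix.one_apply, Finset.mul_sum]
  have L2 : ∀ (i : Fin n) (q : Fin n ⊕ Fin n),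
      ((Matrix.fromBlocks 0 1 (-1) 0 : Matrix (Fin n ⊕ Fin n) (Fin n ⊕ Fin n) ℝ) *
        Matrix.diagonal (Sum.elim ω ω) * M) (Sum.inr i) q = -(ω i * M (Sum.inl i) q) := by
    intro i q
    rw [Matrix.mul_assoc, Matrix.mul_apply]
    simp [Matrix.mul_apply, Fintype.sum_sum_type, Matrix.fromBlocks, Matrix.diagonal,
      Matrix.one_apply, Finset.mul_sum]
  have R1 : ∀ (p : Fin n ⊕ Fin n) (j : Fin n),
      (M * Matrix.diagonal (Sum.elim ω ω) *
        (Matrix.fromBlocks 0 1 (-1) 0 : Matrix (Fin n ⊕ Fin n) (Fin n ⊕ Fin n) ℝ)) p (Sum.inl j)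
        = -(ω j * M p (Sum.inr j)) := by
    intro p j
    rw [Matrix.mul_apply]
    simp [Matrix.mul_apply, Fintype.sum_sum_type, Matrix.fromBlocks, Matrix.diagonal,
      Matrix.one_apply, mul_comm]
  have R2 : ∀ (p : Fin n ⊕ Fin n) (j : Fin n),
      (M * Matrix.diagonal (Sum.elim ω ω) *
        (Matrix.fromBlocks 0 1 (-1) 0 : Matrix (Fin n ⊕ Fin n) (Fin n ⊕ Fin n) ℝ)) p (Sum.inr j)
        = ω j * M p (Sum.inl j) := by
    intro p j
    rw [Matrix.mul_apply]
    simp [Matrix.mul_apply, Fintype.sum_sum_type, Matrix.fromBlocks, Matrix.diagonal,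
      Matrix.one_apply, mul_comm]
  constructor
  · intro h
    have key : ∀ p q,
        ((Matrix.fromBlocks 0 1 (-1) 0 : Matrix (Fin n ⊕ Fin n) (Fin n ⊕ Fin n) ℝ) *
          Matrix.diagonal (Sum.elim ω ω) * M) p q
        = (M * Matrix.diagonal (Sum.elim ω ω) *
          (Matrix.fromBlocks 0 1 (-1) 0 : Matrix (Fin n ⊕ Fin n) (Fin n ⊕ Fin n) ℝ)) p q := by
      intro p q
      exact congrFun (congrFun (sub_eq_zero.mp h) p) q
    have E1 : ∀ i j, ω i * M (Sum.inr i) (Sum.inl j) = -(ω j * M (Sum.inl i) (Sum.inr j)) := by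
      intro i j; have := key (Sum.inl i) (Sum.inl j); rwa [L1, R1] at this
    have E2 : ∀ i j, ω i * M (Sum.inr i) (Sum.inr j) = ω j * M (Sum.inl i) (Sum.inl j) := by
      intro i j; have := key (Sum.inl i) (Sum.inr j); rwa [L1, R2] at this
    have E3 : ∀ i j, ω i * M (Sum.inl i) (Sum.inl j) = ω j * M (Sum.inr i) (Sum.inr j) := by
      intro i j; have := key (Sum.inr i) (Sum.inl j); rw [L2, R1] at this
      exact neg_injective this
    have E4 : ∀ i j, ω i * M (Sum.inl i) (Sum.inr j) = -(ω j * M (Sum.inr i) (Sum.inl j)) := by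
      intro i j; have := key (Sum.inr i) (Sum.inr j); rw [L2, R2] at this
      linarith [this]
    have hsq : ∀ i j, i ≠ j → ∀ x : ℝ, ω i ^ 2 * x = ω j ^ 2 * x → x = 0 := by
      intro i j hij x hx
      by_contra hx0
      exact hω' i j hij (mul_right_cancel₀ hx0 hx)
    have hsym : ∀ i j, M (Sum.inr i) (Sum.inl j) = M (Sum.inl j) (Sum.inr i) := by
      intro i j
      conv_lhs => rw [← hM]
      rw [Matrix.transpose_apply]
    have hoffd : ∀ i, M (Sum.inl i) (Sum.inr i) = 0 := by
      intro i
      have h1 := E4 i i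
      rw [hsym i i] at h1
      have h2 : ω i * M (Sum.inl i) (Sum.inr i) = 0 := by linarith
      rcases mul_eq_zero.mp h2 with h | h
      · exact absurd h (hω i)
      · exact h
    refine ⟨fun i => M (Sum.inl i) (Sum.inl i), ?_⟩
    ext p q
    rcases p with i | i <;> rcases q with j | j
    · by_cases hij : i = j
      · subst hij; simp [Matrix.diagonal]
      · have hz : M (Sum.inl i) (Sum.inl j) = 0 := by
          refine hsq i j hij _ ?_
          linear_combination ω i * E3 i j + ω j * E2 i j
        simp [Matrix.diagonal, hij, hz]
    · by_cases hij : i = j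
      · subst hij; simp [Matrix.diagonal, hoffd i]
      · have hz : M (Sum.inl i) (Sum.inr j) = 0 := by
          refine hsq i j hij _ ?_
          linear_combination ω i * E4 i j - ω j * E1 i j
        simp [Matrix.diagonal, hz]
    · by_cases hij : i = j
      · subst hij; rw [hsym i i, hoffd i]; simp [Matrix.diagonal]
      · have hz : M (Sum.inr i) (Sum.inl j) = 0 := by
          refine hsq i j hij _ ?_
          linear_combination ω i * E1 i j - ω j * E4 i j
        simp [Matrix.diagonal, hz]
    · by_cases hij : i = j
      · subst hij
        have := mul_left_cancel₀ (hω i) (E3 i i)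
        simp [Matrix.diagonal, ← this]
      · have hz : M (Sum.inr i) (Sum.inr j) = 0 := by
          refine hsq i j hij _ ?_
          linear_combination ω i * E2 i j + ω j * E3 i j
        simp [Matrix.diagonal, hij, hz]
  · rintro ⟨a, rfl⟩
    ext p q
    rw [Matrix.sub_apply]
    rcases p with i | i
    · rw [L1]
      rcases q with j | j
      · rw [R1]; simp [Matrix.diagonal]
      · rw [R2]
        by_cases hij : i = j
        · subst hij; simp [Matrix.diagonal]
        · simp [Matrix.diagonal, hij]
    · rw [L2]
      rcases q with j | j
      · rw [R1]
        by_cases hij : i = j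
        · subst hij; simp [Matrix.diagonal]
        · simp [Matrix.diagonal, hij]
      · rw [R2]; simp [Matrix.diagonal]
end

section
/- For A = diag(ω₁,…,ω_n,ω₁,…,ω_n) with ω₁²,…,ω_n² pairwise distinct and nonzero, a symmetric 2n×2n matrix M lies in the range of χ_A(B) = BJA − AJB (B ranging over symmetric matrices) if and only if the diagonal of M has the form (g₁,…,g_n,−g₁,…,−g_n) for some real g₁,…,g_n. -/
/-!
Write a symmetric `B` in blocks as `[[P, Q], [Qᵀ, R]]` and `D = diagonal ω`. Then
`χ_A(B) = [[-(QD + DQᵀ), PD - DR], [DP - RD, QᵀD + DQ]]`, whose two diagonal blocks have opposite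
diagonals `∓ 2 ωᵢ Qᵢᵢ`. Conversely, passing to `Q ± Qᵀ` and `P ∓ R` turns the prescribed blocks into
the Sylvester equations `XD + DX = C` and `XD - DX = C`, solved entrywise by dividing `Cᵢⱼ` by
`ωᵢ + ωⱼ` and by `ωⱼ - ωᵢ` (`i ≠ j`); both are nonzero because the `ωᵢ²` are distinct and nonzero.
-/

open Matrix

section Sylvester

variable {m K : Type*} [Field K] (d : m → K) (C : Matrix m m K)

def anticommSolution : Matrix m m K := of fun i j => C i j / (d i + d j)

-- On the diagonal this divides by `0`, so it vanishes there: exactly what `X D - D X` forces.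
def commSolution : Matrix m m K := of fun i j => C i j / (d j - d i)

theorem anticommSolution_transpose : (anticommSolution d C)ᵀ = anticommSolution d Cᵀ := by
  ext i j
  simp [anticommSolution, add_comm]

theorem anticommSolution_mul_diagonal_add_diagonal_mul [Fintype m] [DecidableEq m]
    (hd : ∀ i j, d i + d j ≠ 0) :
    anticommSolution d C * diagonal d + diagonal d * anticommSolution d C = C := by
  ext i j
  simp only [anticommSolution, Matrix.add_apply, mul_diagonal, diagonal_mul, of_apply]
  field_simp [hd i j]
  ring

theorem commSolution_transpose : (commSolution d C)ᵀ = -commSolution d Cᵀ := by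
  ext i j
  simp [commSolution, ← div_neg, neg_sub]

theorem commSolution_neg : commSolution d (-C) = -commSolution d C := by
  ext i j
  simp [commSolution, neg_div]

theorem commSolution_mul_diagonal_sub_diagonal_mul [Fintype m] [DecidableEq m]
    (hd : Function.Injective d) (hC : ∀ i, C i i = 0) :
    commSolution d C * diagonal d - diagonal d * commSolution d C = C := by
  ext i j
  simp only [commSolution, Matrix.sub_apply, mul_diagonal, diagonal_mul, of_apply]
  rcases eq_or_ne i j with rfl | hij
  · simp [hC]
  · field_simp [sub_ne_zero.2 (hd.ne hij.symm)]

variable [Fintype m] [DecidableEq m] [NeZero (2 : K)] {d}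

theorem exists_mul_diagonal_add_diagonal_mul_transpose (hadd : ∀ i j, d i + d j ≠ 0)
    (hinj : Function.Injective d) {X Y : Matrix m m K} (hX : Xᵀ = X) (hY : Yᵀ = Y)
    (hXY : ∀ i, X i i = Y i i) :
    ∃ Q : Matrix m m K, Q * diagonal d + diagonal d * Qᵀ = X ∧
      Qᵀ * diagonal d + diagonal d * Q = Y := by
  set U := anticommSolution d (X + Y)
  set V := commSolution d (X - Y)
  have hU : U * diagonal d + diagonal d * U = X + Y :=
    anticommSolution_mul_diagonal_add_diagonal_mul d _ hadd
  have hV : V * diagonal d - diagonal d * V = X - Y :=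
    commSolution_mul_diagonal_sub_diagonal_mul d _ hinj fun i => sub_eq_zero.2 (hXY i)
  have hUt : Uᵀ = U := by rw [anticommSolution_transpose, transpose_add, hX, hY]
  have hVt : Vᵀ = -V := by rw [commSolution_transpose, transpose_sub, hX, hY]
  refine ⟨(2 : K)⁻¹ • (U + V), ?_, ?_⟩ <;>
    simp only [transpose_smul, transpose_add, hUt, hVt, Matrix.smul_mul, Matrix.mul_smul,
      Matrix.add_mul, Matrix.mul_add, Matrix.neg_mul, Matrix.mul_neg]
  · linear_combination (norm := match_scalars <;> field_simp <;> ring)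
      (2 : K)⁻¹ • hU + (2 : K)⁻¹ • hV
  · linear_combination (norm := match_scalars <;> field_simp <;> ring)
      (2 : K)⁻¹ • hU - (2 : K)⁻¹ • hV

theorem exists_symm_mul_diagonal_sub_diagonal_mul (hadd : ∀ i j, d i + d j ≠ 0)
    (hinj : Function.Injective d) (Z : Matrix m m K) :
    ∃ P R : Matrix m m K, Pᵀ = P ∧ Rᵀ = R ∧ P * diagonal d - diagonal d * R = Z ∧
      diagonal d * P - R * diagonal d = Zᵀ := by
  set U := anticommSolution d (Z + Zᵀ)
  set V := commSolution d (Z - Zᵀ)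
  have hU : U * diagonal d + diagonal d * U = Z + Zᵀ :=
    anticommSolution_mul_diagonal_add_diagonal_mul d _ hadd
  have hV : V * diagonal d - diagonal d * V = Z - Zᵀ :=
    commSolution_mul_diagonal_sub_diagonal_mul d _ hinj fun i => by simp
  have hUt : Uᵀ = U := by
    rw [anticommSolution_transpose, transpose_add, transpose_transpose, add_comm]
  have hVt : Vᵀ = V := by
    rw [commSolution_transpose, transpose_sub, transpose_transpose, ← neg_sub, commSolution_neg,
      neg_neg]
  refine ⟨(2 : K)⁻¹ • (V + U), (2 : K)⁻¹ • (V - U), ?_, ?_, ?_, ?_⟩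
  · rw [transpose_smul, transpose_add, hUt, hVt]
  · rw [transpose_smul, transpose_sub, hUt, hVt]
  all_goals
    simp only [Matrix.smul_mul, Matrix.mul_smul, Matrix.add_mul, Matrix.mul_add, Matrix.sub_mul,
      Matrix.mul_sub]
  · linear_combination (norm := match_scalars <;> field_simp <;> ring)
      (2 : K)⁻¹ • hU + (2 : K)⁻¹ • hV
  · linear_combination (norm := match_scalars <;> field_simp <;> ring)
      (2 : K)⁻¹ • hU - (2 : K)⁻¹ • hV

end Sylvester

section Chi

variable {m α : Type*} [Fintype m] [DecidableEq m]

def chi [Ring α] (A B : Matrix (m ⊕ m) (m ⊕ m) α) : Matrix (m ⊕ m) (m ⊕ m) α :=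
  B * fromBlocks 0 1 (-1) 0 * A - A * fromBlocks 0 1 (-1) 0 * B

theorem chi_fromBlocks [Ring α] (D P Q S R : Matrix m m α) :
    chi (fromBlocks D 0 0 D) (fromBlocks P Q S R) =
      fromBlocks (-(Q * D + D * S)) (P * D - D * R) (D * P - R * D) (S * D + D * Q) := by
  simp only [chi, fromBlocks_multiply, sub_eq_add_neg, fromBlocks_neg, fromBlocks_add, mul_zero,
    mul_neg, mul_one, zero_add, neg_mul, add_zero, neg_zero, zero_mul, neg_neg, neg_add_rev,
    fromBlocks_inj, and_true, true_and]
  constructor <;> abel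

theorem chi_diagonal_inr_inr [CommRing α] (d : m → α) (B : Matrix (m ⊕ m) (m ⊕ m) α) (i : m) :
    chi (diagonal (Sum.elim d d)) B (.inr i) (.inr i) =
      -chi (diagonal (Sum.elim d d)) B (.inl i) (.inl i) := by
  rw [← fromBlocks_toBlocks B, ← fromBlocks_diagonal, chi_fromBlocks]
  simp only [neg_add_rev, fromBlocks_apply₂₂, Matrix.add_apply, mul_diagonal, diagonal_mul,
    fromBlocks_apply₁₁, Matrix.neg_apply, neg_neg]
  ring

end Chi

theorem exists_symm_chi_eq {m K : Type*} [Fintype m] [DecidableEq m] [Field K] [NeZero (2 : K)]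
    {d : m → K} (hadd : ∀ i j, d i + d j ≠ 0) (hinj : Function.Injective d)
    {M : Matrix (m ⊕ m) (m ⊕ m) K} (hM : Mᵀ = M)
    (hdiag : ∀ i, M (.inr i) (.inr i) = -M (.inl i) (.inl i)) :
    ∃ B, Bᵀ = B ∧ M = chi (diagonal (Sum.elim d d)) B := by
  rw [← fromBlocks_toBlocks M, fromBlocks_transpose, fromBlocks_inj] at hM
  obtain ⟨h₁₁, -, h₁₂, h₂₂⟩ := hM
  obtain ⟨Q, hQ₁₁, hQ₂₂⟩ := exists_mul_diagonal_add_diagonal_mul_transpose hadd hinj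
    (X := -M.toBlocks₁₁) (Y := M.toBlocks₂₂) (by rw [transpose_neg, h₁₁]) h₂₂
    fun i => by simp [toBlocks₁₁, toBlocks₂₂, hdiag]
  obtain ⟨P, R, hP, hR, hPR₁₂, hPR₂₁⟩ :=
    exists_symm_mul_diagonal_sub_diagonal_mul hadd hinj M.toBlocks₁₂
  refine ⟨fromBlocks P Q Qᵀ R, by rw [fromBlocks_transpose, transpose_transpose, hP, hR], ?_⟩
  rw [← fromBlocks_diagonal, chi_fromBlocks, hQ₁₁, hQ₂₂, hPR₁₂, hPR₂₁, h₁₂, neg_neg,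
    fromBlocks_toBlocks]

/-- For `A = diag(ω₁,…,ω_n,ω₁,…,ω_n)` with the `ω_i` nonzero and with
pairwise distinct squares, a symmetric matrix `M` lies in the range of
`χ_A(B) = B*J*A - A*J*B` (with `B` symmetric) iff its diagonal has the form
`(g₁,…,g_n,−g₁,…,−g_n)`. -/
theorem range_chi (n : ℕ) (ω : Fin n → ℝ)
    (hω : ∀ i, ω i ≠ 0) (hω' : ∀ i j, i ≠ j → ω i ^ 2 ≠ ω j ^ 2)
    (J A : Matrix (Fin n ⊕ Fin n) (Fin n ⊕ Fin n) ℝ)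
    (hJ : J = Matrix.fromBlocks 0 1 (-1) 0)
    (hA : A = Matrix.diagonal (Sum.elim ω ω))
    (M : Matrix (Fin n ⊕ Fin n) (Fin n ⊕ Fin n) ℝ) (hM : Mᵀ = M) :
    (∃ B : Matrix (Fin n ⊕ Fin n) (Fin n ⊕ Fin n) ℝ,
        Bᵀ = B ∧ M = B * J * A - A * J * B) ↔
      ∃ g : Fin n → ℝ, ∀ i : Fin n,
        M (Sum.inl i) (Sum.inl i) = g i ∧ M (Sum.inr i) (Sum.inr i) = -g i := by
  subst hJ hA
  have hadd : ∀ i j, ω i + ω j ≠ 0 := by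
    intro i j h
    rcases eq_or_ne i j with rfl | hij
    · exact hω i (by linarith)
    · exact hω' i j hij (by rw [eq_neg_of_add_eq_zero_left h, neg_sq])
  have hinj : Function.Injective ω := fun i j h => by_contra fun hij => hω' i j hij (by rw [h])
  constructor
  · rintro ⟨B, -, rfl⟩
    exact ⟨fun i => chi _ B (.inl i) (.inl i), fun i => ⟨rfl, chi_diagonal_inr_inr ω B i⟩⟩
  · rintro ⟨g, hg⟩
    exact exists_symm_chi_eq hadd hinj hM fun i => by rw [(hg i).1, (hg i).2]
end

section
/- Majorization criterion (Mirsky, necessity direction): if a real symmetric n×n matrix has eigenvalues ω₁ ≥ … ≥ ω_n and diagonal entries a₁,…,a_n, then the diagonal vector is majorized by the eigenvalue vector: after sorting the a_i decreasingly, every partial sum a₁+…+a_k ≤ ω₁+…+ω_k (1 ≤ k ≤ n−1) and the total sums are equal. -/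
/-!
Diagonalise `M = U D Uᵀ` with `U` orthogonal. Then `M i i = ∑ j, (U i j)² λⱼ`, and the matrix of
squared entries of `U` is doubly stochastic, so after both reorderings the diagonal is `S ω` for a
doubly stochastic `S`. The sum of any `k` entries of `S ω` is `∑ j, cⱼ ωⱼ` with weights
`0 ≤ cⱼ ≤ 1` of total mass `k`, and for decreasing `ω` such a sum is largest when the weights sit
on the first `k` indices (the bathtub principle). The total sums agree because the column sums
of `S` are `1`.
-/

open Matrix Finset

namespace Matrix

variable {n 𝕜 : Type*} [Fintype n] [DecidableEq n] [RCLike 𝕜]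

theorem sum_norm_sq_row_of_mem_unitaryGroup {U : Matrix n n 𝕜} (hU : U ∈ unitaryGroup n 𝕜)
    (i : n) : ∑ j, ‖U i j‖ ^ 2 = 1 := by
  have h := congr_fun₂ (mem_unitaryGroup_iff.1 hU) i i
  simp only [mul_apply, star_apply, ← starRingEnd_apply, RCLike.mul_conj, one_apply_eq] at h
  exact_mod_cast h

theorem map_norm_sq_mem_doublyStochastic {U : Matrix n n 𝕜} (hU : U ∈ unitaryGroup n 𝕜) :
    U.map (‖·‖ ^ 2) ∈ doublyStochastic ℝ n := by
  refine mem_doublyStochastic_iff_sum.2 ⟨fun i j => sq_nonneg _,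
    sum_norm_sq_row_of_mem_unitaryGroup hU, fun j => ?_⟩
  simpa using sum_norm_sq_row_of_mem_unitaryGroup (Unitary.star_mem hU) j

theorem IsHermitian.re_diag_eq_mulVec_eigenvalues {A : Matrix n n 𝕜} (hA : A.IsHermitian) :
    RCLike.re ∘ A.diag =
      (hA.eigenvectorUnitary : Matrix n n 𝕜).map (‖·‖ ^ 2) *ᵥ hA.eigenvalues := by
  ext i
  conv_lhs => rw [Function.comp_apply, diag_apply, hA.spectral_theorem]
  simp only [Unitary.conjStarAlgAut_apply, mul_apply, diagonal_apply, star_apply, mul_ite,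
    mul_zero, sum_ite_eq', mem_univ, if_true, mulVec, dotProduct, map_apply, map_sum]
  refine sum_congr rfl fun j _ => ?_
  rw [mul_right_comm, ← starRingEnd_apply, RCLike.mul_conj]
  simp

end Matrix

section DoublyStochastic

variable {ι R : Type*} [Fintype ι] [CommRing R] [PartialOrder R] [IsOrderedRing R]

theorem sum_mul_le_sum_of_threshold {s : Finset ι} {c ω : ι → R} {t : R}
    (hc₀ : ∀ j, 0 ≤ c j) (hc₁ : ∀ j, c j ≤ 1) (hc : ∑ j, c j = #s)
    (hs : ∀ j ∈ s, t ≤ ω j) (hsc : ∀ j ∉ s, ω j ≤ t) :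
    ∑ j, c j * ω j ≤ ∑ j ∈ s, ω j := by
  classical
  set χ : ι → R := fun j => if j ∈ s then 1 else 0
  have hχ : ∑ j, χ j = #s := by simp [χ]
  have hterm : ∀ j, 0 ≤ (χ j - c j) * (ω j - t) := fun j => by
    by_cases hj : j ∈ s
    · exact mul_nonneg (by simpa [χ, hj] using hc₁ j) (sub_nonneg.2 (hs j hj))
    · exact mul_nonneg_of_nonpos_of_nonpos (by simpa [χ, hj] using hc₀ j)
        (sub_nonpos.2 (hsc j hj))
  -- `χ - c` has total mass `0`, so subtracting the constant `t` from `ω` costs nothing.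
  calc ∑ j, c j * ω j = ∑ j, χ j * ω j - ∑ j, (χ j - c j) * (ω j - t) := by
        simp only [sub_mul, mul_sub, sum_sub_distrib, ← sum_mul, hχ, hc]; ring
    _ ≤ ∑ j, χ j * ω j := sub_le_self _ (sum_nonneg fun j _ => hterm j)
    _ = ∑ j ∈ s, ω j := by simp [χ]

variable [DecidableEq ι]

theorem sum_mulVec_le_sum_of_mem_doublyStochastic {S : Matrix ι ι R}
    (hS : S ∈ doublyStochastic R ι) {s T : Finset ι} (hsT : #s = #T) {ω : ι → R} {t : R}
    (hT : ∀ j ∈ T, t ≤ ω j) (hTc : ∀ j ∉ T, ω j ≤ t) :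
    ∑ i ∈ s, (S *ᵥ ω) i ≤ ∑ j ∈ T, ω j := by
  have hcol : ∀ j, ∑ i ∈ s, S i j ≤ 1 := fun j =>
    (sum_le_sum_of_subset_of_nonneg (subset_univ s) fun i _ _ =>
      nonneg_of_mem_doublyStochastic hS).trans_eq (sum_col_of_mem_doublyStochastic hS j)
  have htotal : ∑ j, ∑ i ∈ s, S i j = #T := by
    rw [sum_comm, sum_congr rfl fun i _ => sum_row_of_mem_doublyStochastic hS i, ← hsT]
    simp
  calc ∑ i ∈ s, (S *ᵥ ω) i = ∑ j, (∑ i ∈ s, S i j) * ω j := by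
        simp only [mulVec, dotProduct, sum_mul]; exact sum_comm
    _ ≤ ∑ j ∈ T, ω j := sum_mul_le_sum_of_threshold
        (fun j => sum_nonneg fun i _ => nonneg_of_mem_doublyStochastic hS) hcol htotal hT hTc

theorem Fin.sum_filter_lt_mulVec_le_of_mem_doublyStochastic {n k : ℕ} (hk : k < n)
    {S : Matrix (Fin n) (Fin n) R} (hS : S ∈ doublyStochastic R (Fin n)) {ω : Fin n → R}
    (hω : Antitone ω) :
    ∑ i ∈ univ.filter (fun i : Fin n => (i : ℕ) < k), (S *ᵥ ω) i ≤
      ∑ i ∈ univ.filter (fun i : Fin n => (i : ℕ) < k), ω i :=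
  sum_mulVec_le_sum_of_mem_doublyStochastic hS rfl (t := ω ⟨k, hk⟩)
    (fun j hj => hω <| by simpa [Fin.le_iff_val_le_val] using (mem_filter.1 hj).2.le)
    (fun j hj => hω <| by simpa [Fin.le_iff_val_le_val] using hj)

end DoublyStochastic

theorem diag_majorized_by_eigenvalues_general (n : ℕ)
    (M : Matrix (Fin n) (Fin n) ℝ) (hM : M.IsHermitian)
    (a ω : Fin n → ℝ)
    (ha : ∃ σ : Equiv.Perm (Fin n), ∀ i, a i = M (σ i) (σ i))
    (hω : ∃ τ : Equiv.Perm (Fin n), ∀ i, ω i = hM.eigenvalues (τ i))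
    (hω' : Antitone ω) :
    (∀ k : ℕ, k ≤ n - 1 →
        ∑ i ∈ Finset.univ.filter (fun i : Fin n => (i : ℕ) < k), a i ≤
          ∑ i ∈ Finset.univ.filter (fun i : Fin n => (i : ℕ) < k), ω i) ∧
      ∑ i, a i = ∑ i, ω i := by
  obtain ⟨σ, hσ⟩ := ha
  obtain ⟨τ, hτ⟩ := hω
  set P := (hM.eigenvectorUnitary : Matrix (Fin n) (Fin n) ℝ).map (‖·‖ ^ 2)
  have hS : P.submatrix σ τ ∈ doublyStochastic ℝ (Fin n) :=
    reindex_mem_doublyStochastic (e₁ := σ.symm) (e₂ := τ.symm)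
      (map_norm_sq_mem_doublyStochastic hM.eigenvectorUnitary.2)
  have haS : a = P.submatrix σ τ *ᵥ ω := by
    have hωτ : ω ∘ τ.symm = hM.eigenvalues := funext fun j => by simp [hτ]
    rw [submatrix_mulVec_equiv, hωτ, ← hM.re_diag_eq_mulVec_eigenvalues]
    funext i
    simp [hσ]
  subst haS
  refine ⟨fun k hk => ?_, sum_mulVec_of_mem_doublyStochastic hS⟩
  obtain rfl | hn := n.eq_zero_or_pos
  · simp
  exact Fin.sum_filter_lt_mulVec_le_of_mem_doublyStochastic (by omega) hS hω'

/-- Schur–Horn / Mirsky necessity: the diagonal of a real symmetric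
matrix is majorized by its eigenvalue vector: for decreasing rearrangements `a` of
the diagonal and `ω` of the eigenvalues, all partial sums of `a` are at most those
of `ω`, and the total sums agree. -/
theorem diag_majorized_by_eigenvalues (n : ℕ)
    (M : Matrix (Fin n) (Fin n) ℝ) (hM : M.IsHermitian)
    (a ω : Fin n → ℝ)
    (ha : ∃ σ : Equiv.Perm (Fin n), ∀ i, a i = M (σ i) (σ i))
    (hω : ∃ τ : Equiv.Perm (Fin n), ∀ i, ω i = hM.eigenvalues (τ i))
    (ha' : Antitone a) (hω' : Antitone ω) :
    (∀ k : ℕ, k ≤ n - 1 →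
        ∑ i ∈ Finset.univ.filter (fun i : Fin n => (i : ℕ) < k), a i ≤
          ∑ i ∈ Finset.univ.filter (fun i : Fin n => (i : ℕ) < k), ω i) ∧
      ∑ i, a i = ∑ i, ω i :=
  diag_majorized_by_eigenvalues_general n M hM a ω ha hω hω'
end

section
/- Combined statement (Mirsky + signature): for every l ≥ 1 and every m with 1 ≤ m ≤ 2l−1, there exists a real symmetric 2l×2l matrix G whose diagonal is (1,…,1,−1,…,−1) (l ones followed by l minus ones) and which has exactly m positive eigenvalues and 2l−m negative eigenvalues (counted with multiplicity), all nonzero. -/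
/-!
On an index set `S` where the diagonal is constantly `σ`, replace the diagonal block by
`σ (2J - I) = -σ I + 2σ 𝟙 𝟙ᵀ`. The diagonal is unchanged, while by the matrix determinant lemma
the spectrum of the block becomes `σ (2|S| - 1)` once and `-σ` with multiplicity `|S| - 1`:
exactly `|S| - 1` eigenvalues change sign. Taking `|S| = l - m + 1` inside the `+1` block, or
`|S| = m - l + 1` inside the `-1` block, leaves `m` positive and `2l - m` negative eigenvalues.
-/

open Matrix Finset Polynomial

variable {n : Type*} [Fintype n] [DecidableEq n]

theorem det_diagonal_sub_vecMulVec {K : Type*} [Field K] {D : n → K} (hD : ∀ i, D i ≠ 0)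
    (w v : n → K) :
    (diagonal D - vecMulVec w v).det = (∏ i, D i) * (1 - ∑ i, w i * v i / D i) := by
  have : diagonal D - vecMulVec w v
      = diagonal D * (1 + replicateCol Unit (-(w / D)) * replicateRow Unit v) := by
    rw [Matrix.mul_add, Matrix.mul_one, ← vecMulVec_eq, sub_eq_add_neg]
    congr 1
    ext i j
    simp only [Matrix.neg_apply, neg_vecMulVec, vecMulVec_apply, diagonal_mul, Pi.div_apply,
      mul_neg, neg_inj]
    rw [← mul_assoc, mul_div_cancel₀ _ (hD i)]
  rw [this, det_mul, det_diagonal, det_one_add_replicateCol_mul_replicateRow]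
  simp only [dotProduct, Pi.neg_apply, Pi.div_apply, mul_neg, sum_neg_distrib, ← sub_eq_add_neg]
  simp_rw [mul_div_assoc', mul_comm (v _)]

theorem prod_sub_update {R : Type*} [CommRing R] (f : n → R) (i₀ : n) (b x : R) :
    ∏ i, (x - Function.update f i₀ b i) = (x - b) * ∏ i ∈ univ.erase i₀, (x - f i) := by
  rw [← mul_prod_erase univ _ (mem_univ i₀), Function.update_self]
  congr 1
  exact prod_congr rfl fun i hi => by rw [Function.update_of_ne (ne_of_mem_erase hi)]

theorem charpoly_diagonal_add_smul_vecMulVec_indicator {K : Type*} [Field K] [Infinite K]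
    {S : Finset n} {i₀ : n} (hi₀ : i₀ ∈ S) {e : n → K} {a : K} (he : ∀ i ∈ S, e i = a) (c : K) :
    (diagonal e + c • vecMulVec ((S : Set n).indicator 1) ((S : Set n).indicator 1)).charpoly =
      (diagonal (Function.update e i₀ (a + c * #S))).charpoly := by
  set χ : n → K := (S : Set n).indicator 1
  apply eq_of_infinite_eval_eq
  refine (Set.finite_range e).infinite_compl.mono fun x hx => ?_
  have hxe : ∀ i, x - e i ≠ 0 := fun i h => hx ⟨i, (sub_eq_zero.mp h).symm⟩
  have hxa : x - a ≠ 0 := he i₀ hi₀ ▸ hxe i₀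
  have hsplit : scalar n x - (diagonal e + c • vecMulVec χ χ) =
      diagonal (fun i => x - e i) - vecMulVec (c • χ) χ := by
    ext i j
    rcases eq_or_ne i j with rfl | hij
    · simp only [scalar_apply, Matrix.sub_apply, Matrix.add_apply, Matrix.smul_apply,
        diagonal_apply_eq, smul_vecMulVec, vecMulVec_apply, smul_eq_mul]
      ring
    · simp [vecMulVec_apply, hij]
  have hsum : ∑ i, (c • χ) i * χ i / (x - e i) = #S * c / (x - a) := by
    have hterm : ∀ i, (c • χ) i * χ i / (x - e i) = if i ∈ S then c / (x - a) else 0 := by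
      intro i
      by_cases hi : i ∈ S <;> simp [χ, hi, he]
    rw [sum_congr rfl fun i _ => hterm i, sum_ite_mem, univ_inter, sum_const, nsmul_eq_mul,
      mul_div_assoc]
  have hprod : ∏ i, (x - e i) = (x - a) * ∏ i ∈ univ.erase i₀, (x - e i) := by
    rw [← mul_prod_erase univ _ (mem_univ i₀), he i₀ hi₀]
  simp only [Set.mem_ofPred_eq, eval_charpoly, charpoly_diagonal, eval_prod, eval_sub, eval_X,
    eval_C]
  rw [hsplit, det_diagonal_sub_vecMulVec hxe, hsum, hprod, prod_sub_update]
  field_simp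
  ring

theorem Matrix.IsHermitian.map_eigenvalues_eq_of_charpoly_eq {A : Matrix n n ℝ}
    (hA : A.IsHermitian) {d : n → ℝ} (h : A.charpoly = (diagonal d).charpoly) :
    univ.val.map hA.eigenvalues = univ.val.map d := by
  have := hA.roots_charpoly_eq_eigenvalues
  rw [h, charpoly_diagonal, roots_prod _ _ (prod_ne_zero_iff.mpr fun i _ => X_sub_C_ne_zero _)]
    at this
  simpa using this.symm

theorem exists_isHermitian_diag_eq_map_eigenvalues_eq (ε : n → ℝ) {S : Finset n} {i₀ : n}
    (hi₀ : i₀ ∈ S) {σ : ℝ} (hε : ∀ i ∈ S, ε i = σ) :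
    ∃ (G : Matrix n n ℝ) (hG : G.IsHermitian), (∀ i, G i i = ε i) ∧
      univ.val.map hG.eigenvalues =
        univ.val.map (Function.update (S.piecewise (fun _ => -σ) ε) i₀ (σ * (2 * #S - 1))) := by
  set χ : n → ℝ := (S : Set n).indicator 1
  set G := diagonal (S.piecewise (fun _ => -σ) ε) + (2 * σ) • vecMulVec χ χ
  have hG : G.IsHermitian := (isHermitian_diagonal _).add <| by
    ext i j
    simp [vecMulVec_apply, mul_comm]
  refine ⟨G, hG, fun i => ?_, hG.map_eigenvalues_eq_of_charpoly_eq ?_⟩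
  · by_cases hi : i ∈ S
    · simp only [G, χ, Matrix.add_apply, Matrix.smul_apply, diagonal_apply_eq, vecMulVec_apply,
        piecewise_eq_of_mem _ _ _ hi, Set.indicator_of_mem (mem_coe.mpr hi), Pi.one_apply,
        smul_eq_mul, hε i hi]
      ring
    · simp [G, χ, vecMulVec_apply, hi]
  · rw [charpoly_diagonal_add_smul_vecMulVec_indicator hi₀
      fun i hi => piecewise_eq_of_mem _ _ _ hi]
    congr 3
    ring

omit [DecidableEq n] in
theorem card_filter_eq_of_map_eq {α : Type*} {f g : n → α} (h : univ.val.map f = univ.val.map g)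
    (p : α → Prop) [DecidablePred p] : #{i | p (f i)} = #{i | p (g i)} := by
  have key : ∀ f : n → α, #{i | p (f i)} = (univ.val.map f).countP p := fun f => by
    rw [Multiset.countP_map]; rfl
  rw [key, key, h]

theorem card_pos_card_neg_of_map_eq {f g : n → ℝ} (h : univ.val.map f = univ.val.map g)
    (T : Finset n) (hg : ∀ i, if i ∈ T then 0 < g i else g i < 0) :
    #{i | 0 < f i} = #T ∧ #{i | f i < 0} = Fintype.card n - #T ∧ ∀ i, f i ≠ 0 := by
  have hpos : ({i | 0 < g i} : Finset n) = T := by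
    ext i
    have := hg i
    split_ifs at this with hi <;> simp [hi, this, this.le]
  have hneg : ({i | g i < 0} : Finset n) = Tᶜ := by
    ext i
    have := hg i
    split_ifs at this with hi <;> simp [hi, this, this.le]
  refine ⟨by rw [card_filter_eq_of_map_eq h (0 < ·), hpos],
    by rw [card_filter_eq_of_map_eq h (· < 0), hneg, card_compl], fun i => ?_⟩
  obtain ⟨j, -, hj⟩ := Multiset.mem_map.mp (h ▸ Multiset.mem_map_of_mem _ (mem_univ_val i))
  rw [← hj]
  have := hg j
  split_ifs at this
  exacts [this.ne', this.ne]

theorem exists_isHermitian_pmOneDiag_spectrum_pos_iff_lt (l m : ℕ) (hm : 1 ≤ m)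
    (hm' : m < 2 * l) :
    ∃ (G : Matrix (Fin (2 * l)) (Fin (2 * l)) ℝ) (hG : G.IsHermitian) (d : Fin (2 * l) → ℝ),
      (∀ i : Fin (2 * l), G i i = if (i : ℕ) < l then 1 else -1) ∧
      univ.val.map hG.eigenvalues = univ.val.map d ∧
      ∀ i : Fin (2 * l), if (i : ℕ) < m then 0 < d i else d i < 0 := by
  let ε : Fin (2 * l) → ℝ := fun i => if (i : ℕ) < l then 1 else -1
  rcases le_or_gt m l with hml | hlm
  -- `S = [m - 1, l)` turns the ones at `m, …, l - 1` into negative eigenvalues.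
  · obtain ⟨S, hS⟩ : ∃ S : Finset (Fin (2 * l)), ∀ i, i ∈ S ↔ m - 1 ≤ (i : ℕ) ∧ (i : ℕ) < l :=
      ⟨univ.filter fun i : Fin (2 * l) => m - 1 ≤ (i : ℕ) ∧ (i : ℕ) < l, by simp⟩
    have hi₀ : ⟨m - 1, by omega⟩ ∈ S := (hS _).mpr (by dsimp only; omega)
    have hcard : (1 : ℝ) ≤ #S := by exact_mod_cast card_pos.mpr ⟨_, hi₀⟩
    obtain ⟨G, hG, hdiag, hspec⟩ := exists_isHermitian_diag_eq_map_eigenvalues_eq ε hi₀ (σ := 1)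
      (fun i hi => by simp [ε, ((hS i).mp hi).2])
    refine ⟨G, hG, _, hdiag, hspec, fun i => ?_⟩
    simp only [ε, Function.update_apply, Finset.piecewise, hS, Fin.ext_iff]
    split_ifs <;> first | omega | linarith
  -- `S = [l, m]` turns the minus ones at `l, …, m - 1` into positive eigenvalues.
  · obtain ⟨S, hS⟩ : ∃ S : Finset (Fin (2 * l)), ∀ i, i ∈ S ↔ l ≤ (i : ℕ) ∧ (i : ℕ) ≤ m :=
      ⟨univ.filter fun i : Fin (2 * l) => l ≤ (i : ℕ) ∧ (i : ℕ) ≤ m, by simp⟩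
    have hi₀ : ⟨m, by omega⟩ ∈ S := (hS _).mpr (by dsimp only; omega)
    have hcard : (1 : ℝ) ≤ #S := by exact_mod_cast card_pos.mpr ⟨_, hi₀⟩
    obtain ⟨G, hG, hdiag, hspec⟩ := exists_isHermitian_diag_eq_map_eigenvalues_eq ε hi₀ (σ := -1)
      (fun i hi => by simp [ε, show ¬(i : ℕ) < l by have := (hS i).mp hi; omega])
    refine ⟨G, hG, _, hdiag, hspec, fun i => ?_⟩
    simp only [ε, Function.update_apply, Finset.piecewise, hS, Fin.ext_iff]
    split_ifs <;> first | omega | linarith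

theorem exists_signature_matrix_general (l m : ℕ) (hm : 1 ≤ m)
    (hm' : m ≤ 2 * l - 1) :
    ∃ (G : Matrix (Fin (2 * l)) (Fin (2 * l)) ℝ) (hG : G.IsHermitian),
      (∀ i : Fin (2 * l), G i i = if (i : ℕ) < l then 1 else -1) ∧
      (Finset.univ.filter (fun i => 0 < hG.eigenvalues i)).card = m ∧
      (Finset.univ.filter (fun i => hG.eigenvalues i < 0)).card = 2 * l - m ∧
      ∀ i, hG.eigenvalues i ≠ 0 := by
  obtain ⟨G, hG, d, hdiag, hspec, hd⟩ :=
    exists_isHermitian_pmOneDiag_spectrum_pos_iff_lt l m hm (by omega)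
  have hcard : #{i : Fin (2 * l) | (i : ℕ) < m} = m := by
    rw [Fin.card_filter_val_lt]
    omega
  obtain ⟨hpos, hneg, hne⟩ :=
    card_pos_card_neg_of_map_eq hspec {i | (i : ℕ) < m} fun i => by simpa using hd i
  rw [hcard] at hpos
  rw [hcard, Fintype.card_fin] at hneg
  exact ⟨G, hG, hdiag, hpos, hneg, hne⟩

/-- For every `l ≥ 1` and `1 ≤ m ≤ 2l−1` there is a real symmetric
`2l×2l` matrix whose diagonal is `(1,…,1,−1,…,−1)` (`l` ones then `l` minus ones)
with exactly `m` positive and `2l−m` negative eigenvalues, all nonzero. -/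
theorem exists_signature_matrix (l m : ℕ) (hl : 1 ≤ l) (hm : 1 ≤ m)
    (hm' : m ≤ 2 * l - 1) :
    ∃ (G : Matrix (Fin (2 * l)) (Fin (2 * l)) ℝ) (hG : G.IsHermitian),
      (∀ i : Fin (2 * l), G i i = if (i : ℕ) < l then 1 else -1) ∧
      (Finset.univ.filter (fun i => 0 < hG.eigenvalues i)).card = m ∧
      (Finset.univ.filter (fun i => hG.eigenvalues i < 0)).card = 2 * l - m ∧
      ∀ i, hG.eigenvalues i ≠ 0 :=
  exists_signature_matrix_general l m hm hm'
end

section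
/- Mirsky's theorem (sufficiency direction): if real numbers a₁,…,a_n and ω₁,…,ω_n satisfy the majorization (a₁,…,a_n) ≺ (ω₁,…,ω_n), then there exists a real symmetric n×n matrix with eigenvalues ω₁,…,ω_n and diagonal entries a₁,…,a_n in that order. -/
/-!
Sort `a` and `ω` decreasingly and induct on `n`. Choose `k` with `ω k ≥ a 0 > ω (k + 1)`. A plane
rotation turns `diag (ω k, ω (k + 1))` into a symmetric `2 × 2` block with diagonal `(a 0, b)`,
where `b = ω k + ω (k + 1) - a 0`. Merging `ω k` and `ω (k + 1)` into `b` gives a decreasing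
sequence `ω'` that still majorizes `(a 1, …, a (n - 1))`, so by induction the latter is the
diagonal of `U * diag ω' * Uᵀ` for an orthogonal `U`. Conjugating the rotated matrix by `1 ⊕ U`
keeps the entry `a 0` and puts exactly this diagonal below it.
-/

open Matrix Finset

def IsSchurHornPair {ι : Type*} [Fintype ι] [DecidableEq ι] (a ω : ι → ℝ) : Prop :=
  ∃ U ∈ orthogonalGroup ι ℝ, (U * diagonal ω * Uᵀ).diag = a

theorem exists_perm_eq_comp_of_map_eq {ι α : Type*} [Fintype ι] [DecidableEq α] {f g : ι → α}
    (h : univ.val.map f = univ.val.map g) : ∃ π : Equiv.Perm ι, f = g ∘ π := by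
  have hcard (c : α) : Fintype.card {i // f i = c} = Fintype.card {i // g i = c} := by
    have := congrArg (Multiset.count c) h
    simp only [Multiset.count_map] at this
    simpa [Fintype.card_subtype, Finset.card, eq_comm] using this
  exact ⟨Equiv.ofFiberEquiv fun c => Fintype.equivOfCardEq (hcard c),
    funext fun i => (Equiv.ofFiberEquiv_map _ i).symm⟩

theorem exists_sq_add_sq_eq_one_and_eq {x l₁ l₂ : ℝ} (h₂ : l₂ ≤ x) (h₁ : x ≤ l₁) :
    ∃ c s : ℝ, c ^ 2 + s ^ 2 = 1 ∧ c ^ 2 * l₁ + s ^ 2 * l₂ = x := by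
  obtain ⟨t₂, t₁, ht₂, ht₁, ht, hx⟩ : x ∈ segment ℝ l₂ l₁ := by
    rw [segment_eq_Icc (h₂.trans h₁)]
    exact ⟨h₂, h₁⟩
  refine ⟨√t₁, √t₂, ?_, ?_⟩ <;>
    simp only [Real.sq_sqrt ht₁, Real.sq_sqrt ht₂, smul_eq_mul] at hx ⊢ <;> linarith

section

variable {ι : Type*} [Fintype ι] [DecidableEq ι]

open Polynomial in
theorem Matrix.IsHermitian.exists_perm_eigenvalues_eq {M : Matrix ι ι ℝ} (hM : M.IsHermitian)
    {ω : ι → ℝ} (h : M.charpoly = ∏ i, (X - C (ω i))) :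
    ∃ π : Equiv.Perm ι, hM.eigenvalues = ω ∘ π := by
  apply exists_perm_eq_comp_of_map_eq
  have := congrArg roots (hM.charpoly_eq.symm.trans h)
  rw [roots_prod _ _ (by simp [prod_ne_zero_iff, X_sub_C_ne_zero]),
    roots_prod _ _ (by simp [prod_ne_zero_iff, X_sub_C_ne_zero])] at this
  simpa [Multiset.bind_singleton] using this

theorem fromBlocks_one_zero_zero_mem_orthogonalGroup {κ : Type*} [Fintype κ] [DecidableEq κ]
    {V : Matrix κ κ ℝ} (hV : V ∈ orthogonalGroup κ ℝ) :
    fromBlocks 1 0 0 V ∈ orthogonalGroup (ι ⊕ κ) ℝ := by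
  rw [mem_orthogonalGroup_iff, fromBlocks_transpose, fromBlocks_multiply,
    (mem_orthogonalGroup_iff κ ℝ).mp hV]
  simp

theorem diag_fromBlocks_one_zero_zero_conj {κ : Type*} [Fintype κ] (V : Matrix κ κ ℝ)
    (A : Matrix ι ι ℝ) (B : Matrix ι κ ℝ) (C : Matrix κ ι ℝ) (D : Matrix κ κ ℝ) :
    (fromBlocks 1 0 0 V * fromBlocks A B C D * (fromBlocks 1 0 0 V)ᵀ).diag =
      Sum.elim A.diag (V * D * Vᵀ).diag := by
  rw [fromBlocks_transpose, fromBlocks_multiply, fromBlocks_multiply]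
  ext (i | i) <;> simp

def givensRotation (p : ι) (c s : ℝ) : Matrix (Unit ⊕ ι) (Unit ⊕ ι) ℝ :=
  fromBlocks (of fun _ _ => c) (of fun _ j => if j = p then -s else 0)
    (of fun i _ => if i = p then s else 0) (diagonal (Function.update 1 p c))

theorem givensRotation_mul_diagonal_mul_transpose (p : ι) (c s l₁ l₂ : ℝ) (μ : ι → ℝ) :
    givensRotation p c s * diagonal (Sum.elim (fun _ => l₁) (Function.update μ p l₂)) *
        (givensRotation p c s)ᵀ =
      fromBlocks (of fun _ _ => c ^ 2 * l₁ + s ^ 2 * l₂)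
        (of fun _ j => if j = p then c * s * (l₁ - l₂) else 0)
        (of fun i _ => if i = p then c * s * (l₁ - l₂) else 0)
        (diagonal (Function.update μ p (s ^ 2 * l₁ + c ^ 2 * l₂))) := by
  rw [givensRotation, ← fromBlocks_diagonal, fromBlocks_transpose, fromBlocks_multiply,
    fromBlocks_multiply]
  congr 1 <;> ext i j <;>
    simp only [Matrix.add_apply, Matrix.mul_zero, mul_apply, transpose_apply, diagonal_transpose,
      diagonal_mul_diagonal, diagonal_apply, of_apply, Function.update_apply, Pi.one_apply,
      univ_unique, PUnit.default_eq_unit, mem_univ, sum_ite_eq', sum_ite_irrel, sum_const,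
      card_singleton, one_smul, ite_mul, mul_ite, neg_mul, mul_neg, neg_neg, zero_mul, mul_zero,
      one_mul, mul_one, add_zero, zero_add, ↓reduceIte] <;>
    (try split_ifs) <;> subst_vars <;> first | ring1 | simp_all

theorem givensRotation_mem_orthogonalGroup (p : ι) {c s : ℝ} (h : c ^ 2 + s ^ 2 = 1) :
    givensRotation p c s ∈ orthogonalGroup (Unit ⊕ ι) ℝ := by
  rw [mem_orthogonalGroup_iff]
  convert givensRotation_mul_diagonal_mul_transpose p c s 1 1 1 using 1
  · simp [← Pi.one_def]
  · ext (_ | i) (_ | j) <;> simp [h, add_comm (s ^ 2), one_apply]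

namespace IsSchurHornPair

theorem refl (ω : ι → ℝ) : IsSchurHornPair ω ω :=
  ⟨1, one_mem _, by simp⟩

theorem of_comp_equiv {κ : Type*} [Fintype κ] [DecidableEq κ] {a ω : ι → ℝ} (e₁ e₂ : κ ≃ ι)
    (h : IsSchurHornPair (a ∘ e₁) (ω ∘ e₂)) : IsSchurHornPair a ω := by
  obtain ⟨U, hU, hdiag⟩ := h
  refine ⟨U.submatrix e₁.symm e₂.symm, ?_, ?_⟩
  · rw [mem_orthogonalGroup_iff, transpose_submatrix, submatrix_mul_equiv,
      (mem_orthogonalGroup_iff κ ℝ).mp hU, submatrix_one_equiv]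
  · have : diagonal ω = (diagonal (ω ∘ e₂)).submatrix e₂.symm e₂.symm := by
      simp [submatrix_diagonal_equiv]
    rw [this, transpose_submatrix, submatrix_mul_equiv, submatrix_mul_equiv]
    ext i
    simpa using congrFun hdiag (e₁.symm i)

theorem exists_isHermitian {a ω : ι → ℝ} (h : IsSchurHornPair a ω) :
    ∃ (M : Matrix ι ι ℝ) (hM : M.IsHermitian), M.diag = a ∧
      ∃ π : Equiv.Perm ι, hM.eigenvalues = ω ∘ π := by
  obtain ⟨U, hU, hdiag⟩ := h
  have hM : (U * diagonal ω * Uᵀ).IsHermitian := by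
    simpa using isHermitian_mul_mul_conjTranspose U (isHermitian_diagonal ω)
  refine ⟨_, hM, hdiag, hM.exists_perm_eigenvalues_eq ?_⟩
  rw [charpoly_mul_comm, ← Matrix.mul_assoc, (mem_orthogonalGroup_iff' ι ℝ).mp hU,
    Matrix.one_mul, charpoly_diagonal]

theorem sumElim_update {a μ : ι → ℝ} (h : IsSchurHornPair a μ) (p : ι) {x l₁ l₂ : ℝ}
    (h₂ : l₂ ≤ x) (h₁ : x ≤ l₁) (hp : x + μ p = l₁ + l₂) :
    IsSchurHornPair (Sum.elim (fun _ : Unit => x) a)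
      (Sum.elim (fun _ => l₁) (Function.update μ p l₂)) := by
  obtain ⟨V, hV, hdiag⟩ := h
  obtain ⟨c, s, hcs, hx⟩ := exists_sq_add_sq_eq_one_and_eq h₂ h₁
  have hμp : s ^ 2 * l₁ + c ^ 2 * l₂ = μ p := by linear_combination (l₁ + l₂) * hcs - hx - hp
  set Q : Matrix (Unit ⊕ ι) (Unit ⊕ ι) ℝ := fromBlocks 1 0 0 V
  set W := givensRotation p c s
  refine ⟨Q * W, mul_mem (fromBlocks_one_zero_zero_mem_orthogonalGroup hV)
    (givensRotation_mem_orthogonalGroup p hcs), ?_⟩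
  rw [transpose_mul, ← Matrix.mul_assoc, Matrix.mul_assoc Q, Matrix.mul_assoc Q,
    givensRotation_mul_diagonal_mul_transpose, hx, hμp, Function.update_eq_self,
    diag_fromBlocks_one_zero_zero_conj, hdiag]
  rfl

end IsSchurHornPair

end

def unitSumEquivFin {n : ℕ} (q : Fin (n + 1)) : Unit ⊕ Fin n ≃ Fin (n + 1) :=
  ((finSuccEquiv' q).trans ((Equiv.optionEquivSumPUnit _).trans (Equiv.sumComm _ _))).symm

theorem comp_unitSumEquivFin {α : Type*} {n : ℕ} (q : Fin (n + 1)) (f : Fin (n + 1) → α) :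
    f ∘ unitSumEquivFin q = Sum.elim (fun _ => f q) (f ∘ q.succAbove) := by
  ext (_ | i) <;> simp [unitSumEquivFin]

def mergeAt (ω : ℕ → ℝ) (k : ℕ) (b : ℝ) : ℕ → ℝ := fun j =>
  if j < k then ω j else if j = k then b else ω (j + 1)

theorem update_mergeAt_eq_comp_succAbove {n k : ℕ} (hk : k < n) (ω : ℕ → ℝ) (b : ℝ) :
    Function.update (fun i : Fin n => mergeAt ω k b i) ⟨k, hk⟩ (ω (k + 1)) =
      (fun i : Fin (n + 1) => ω i) ∘ Fin.succAbove ⟨k, by omega⟩ := by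
  ext i
  simp only [Function.update_apply, mergeAt, Function.comp_apply, Fin.succAbove, Fin.lt_def,
    Fin.ext_iff, apply_ite Fin.val, Fin.val_castSucc, Fin.val_succ]
  split_ifs <;> first | rfl | omega | (congr 1; omega)

theorem antitoneOn_mergeAt {n k : ℕ} {ω : ℕ → ℝ} {b : ℝ} (hω : AntitoneOn ω (Set.Iio (n + 1)))
    (h₁ : b ≤ ω k) (h₂ : ω (k + 1) ≤ b) : AntitoneOn (mergeAt ω k b) (Set.Iio n) := by
  intro i hi j hj hij
  rw [Set.mem_Iio] at hi hj
  have h (i j : ℕ) (hij : i ≤ j) (hj : j ≤ n) : ω j ≤ ω i :=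
    hω (Set.mem_Iio.mpr (by omega)) (Set.mem_Iio.mpr (by omega)) hij
  unfold mergeAt
  split_ifs
  all_goals first
    | omega
    | exact h _ _ (by omega) (by omega)
    | linarith [h i k (by omega) (by omega)]
    | linarith [h (k + 1) (j + 1) (by omega) (by omega)]

theorem sum_range_mergeAt_of_le {m k : ℕ} (ω : ℕ → ℝ) (b : ℝ) (hm : m ≤ k) :
    ∑ j ∈ range m, mergeAt ω k b j = ∑ j ∈ range m, ω j :=
  sum_congr rfl fun _ hj => if_pos ((mem_range.mp hj).trans_le hm)

theorem sum_range_mergeAt_of_lt {m k : ℕ} (ω : ℕ → ℝ) (b : ℝ) (hm : k < m) :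
    ∑ j ∈ range m, mergeAt ω k b j + ω k + ω (k + 1) = ∑ j ∈ range (m + 1), ω j + b := by
  induction m, hm using Nat.le_induction with
  | base =>
    have hmerge : mergeAt ω k b k = b := by simp [mergeAt]
    rw [sum_range_succ, sum_range_mergeAt_of_le ω b le_rfl, hmerge, sum_range_succ,
      sum_range_succ]
    ring
  | succ m hm ih =>
    have hmerge : mergeAt ω k b m = ω (m + 1) := by
      simp [mergeAt, show ¬m < k by omega, show m ≠ k by omega]
    rw [sum_range_succ, sum_range_succ _ (m + 1), hmerge]
    linarith

theorem sum_range_le_sum_range_mergeAt {n k : ℕ} {a ω : ℕ → ℝ}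
    (ha : AntitoneOn a (Set.Iio (n + 1)))
    (hmaj : ∀ m ≤ n + 1, ∑ j ∈ range m, a j ≤ ∑ j ∈ range m, ω j) {m : ℕ} (hm : m ≤ n) :
    ∑ j ∈ range m, a (j + 1) ≤ ∑ j ∈ range m, mergeAt ω k (ω k + ω (k + 1) - a 0) j := by
  rcases le_or_gt m k with hmk | hkm
  · rw [sum_range_mergeAt_of_le ω _ hmk]
    refine (sum_le_sum fun j hj => ?_).trans (hmaj m (by omega))
    have := mem_range.mp hj
    exact ha (Set.mem_Iio.mpr (by omega)) (Set.mem_Iio.mpr (by omega)) (by omega)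
  · have := sum_range_mergeAt_of_lt ω (ω k + ω (k + 1) - a 0) hkm
    have := hmaj (m + 1) (by omega)
    rw [sum_range_succ'] at this
    linarith

theorem sum_range_eq_sum_range_mergeAt {n k : ℕ} {a ω : ℕ → ℝ} (hk : k < n)
    (hsum : ∑ j ∈ range (n + 1), a j = ∑ j ∈ range (n + 1), ω j) :
    ∑ j ∈ range n, a (j + 1) = ∑ j ∈ range n, mergeAt ω k (ω k + ω (k + 1) - a 0) j := by
  have := sum_range_mergeAt_of_lt ω (ω k + ω (k + 1) - a 0) hk
  rw [sum_range_succ'] at hsum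
  linarith

theorem exists_le_apply_and_apply_succ_lt {α : Type*} [LinearOrder α] {f : ℕ → α} {x : α}
    {j : ℕ} (h₀ : x ≤ f 0) (hj : f j < x) : ∃ k < j, x ≤ f k ∧ f (k + 1) < x := by
  have hex : ∃ m, f m < x := ⟨j, hj⟩
  have hpos : 0 < Nat.find hex :=
    Nat.pos_of_ne_zero fun h => (Nat.find_spec hex).not_ge (h ▸ h₀)
  refine ⟨Nat.find hex - 1, by have := Nat.find_min' hex hj; omega,
    not_lt.mp (Nat.find_min hex (by omega)), ?_⟩
  rw [Nat.sub_add_cancel hpos]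
  exact Nat.find_spec hex

theorem isSchurHornPair_of_majorized (n : ℕ) {a ω : ℕ → ℝ} (ha : AntitoneOn a (Set.Iio n))
    (hω : AntitoneOn ω (Set.Iio n)) (hmaj : ∀ m ≤ n, ∑ j ∈ range m, a j ≤ ∑ j ∈ range m, ω j)
    (hsum : ∑ j ∈ range n, a j = ∑ j ∈ range n, ω j) :
    IsSchurHornPair (fun i : Fin n => a i) (fun i : Fin n => ω i) := by
  induction n generalizing a ω with
  | zero => exact ⟨1, one_mem _, Subsingleton.elim _ _⟩
  | succ n ih =>
    by_cases hlt : ∃ j < n + 1, ω j < a 0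
    swap
    · -- `a j ≤ a 0 ≤ ω j` for all `j`, and the totals agree
      simp only [not_exists, not_and, not_lt] at hlt
      have hle (j) (hj : j ∈ range (n + 1)) : a j ≤ ω j :=
        (ha (by simp) (Set.mem_Iio.mpr (mem_range.mp hj)) (Nat.zero_le j)).trans
          (hlt j (mem_range.mp hj))
      have heq := (sum_eq_sum_iff_of_le hle).mp hsum
      have : (fun i : Fin (n + 1) => a i) = fun i : Fin (n + 1) => ω i :=
        funext fun i => heq i (mem_range.mpr i.isLt)
      exact this ▸ IsSchurHornPair.refl _
    obtain ⟨j, hj, hωj⟩ := hlt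
    obtain ⟨k, hkj, hk, hk₁⟩ :=
      exists_le_apply_and_apply_succ_lt (by simpa using hmaj 1 (by omega)) hωj
    have hkn : k < n := by omega
    have ha' : AntitoneOn (fun j => a (j + 1)) (Set.Iio n) := fun _ hi _ hj hij =>
      ha (Nat.succ_lt_succ hi) (Nat.succ_lt_succ hj) (Nat.succ_le_succ hij)
    have IH := ih ha' (antitoneOn_mergeAt hω (by linarith) (by linarith))
      (fun m hm => sum_range_le_sum_range_mergeAt ha hmaj hm)
      (sum_range_eq_sum_range_mergeAt hkn hsum)
    have step := IH.sumElim_update ⟨k, hkn⟩ hk₁.le hk (by simp [mergeAt])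
    rw [update_mergeAt_eq_comp_succAbove] at step
    refine IsSchurHornPair.of_comp_equiv (unitSumEquivFin 0) (unitSumEquivFin ⟨k, by omega⟩) ?_
    rw [comp_unitSumEquivFin, comp_unitSumEquivFin]
    convert step using 3 <;> simp

theorem sum_filter_val_lt_eq_sum_range {n k : ℕ} (hk : k ≤ n) (g : ℕ → ℝ) :
    ∑ i ∈ univ.filter (fun i : Fin n => (i : ℕ) < k), g i = ∑ j ∈ range k, g j := by
  rw [sum_filter, Fin.sum_univ_eq_sum_range (fun j => if j < k then g j else 0), ← sum_filter]
  congr 1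
  ext j
  simp only [mem_filter, mem_range]
  omega

theorem antitoneOn_extend_val {n : ℕ} {f : Fin n → ℝ} (hf : Antitone f) :
    AntitoneOn (Function.extend Fin.val f 0) (Set.Iio n) := fun i hi j hj hij => by
  have := hf (show (⟨i, hi⟩ : Fin n) ≤ ⟨j, hj⟩ from hij)
  rwa [← Fin.val_injective.extend_apply f 0, ← Fin.val_injective.extend_apply f 0] at this

theorem isSchurHornPair_of_antitone_of_majorized {n : ℕ} {a ω : Fin n → ℝ} (ha : Antitone a)
    (hω : Antitone ω) (hmaj : ∀ k ≤ n - 1, ∑ i ∈ univ.filter (fun i : Fin n => (i : ℕ) < k), a i ≤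
      ∑ i ∈ univ.filter (fun i : Fin n => (i : ℕ) < k), ω i)
    (hsum : ∑ i, a i = ∑ i, ω i) : IsSchurHornPair a ω := by
  have hext (f : Fin n → ℝ) : (fun i : Fin n => Function.extend Fin.val f 0 i) = f :=
    funext (Fin.val_injective.extend_apply f 0)
  have hsum_ext (f : Fin n → ℝ) {k : ℕ} (hk : k ≤ n) :
      ∑ j ∈ range k, Function.extend Fin.val f 0 j =
        ∑ i ∈ univ.filter (fun i : Fin n => (i : ℕ) < k), f i := by
    rw [← sum_filter_val_lt_eq_sum_range hk, hext]
  have key := isSchurHornPair_of_majorized n (antitoneOn_extend_val ha)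
    (antitoneOn_extend_val hω) (fun k hk => ?_) ?_
  · rwa [hext, hext] at key
  · rw [hsum_ext a hk, hsum_ext ω hk]
    rcases hk.lt_or_eq with hk | rfl
    · exact hmaj k (by omega)
    · simpa using hsum.le
  · simpa [hsum_ext _ le_rfl] using hsum

/-- Mirsky, sufficiency: if `(a₁,…,a_n) ≺ (ω₁,…,ω_n)` (after
sorting both decreasingly, all partial sums of the `a`'s are at most those of the
`ω`'s, and the totals agree), then there exists a real symmetric matrix with
eigenvalues `ω₁,…,ω_n` and diagonal entries `a₁,…,a_n` in that order. -/
theorem mirsky_sufficiency (n : ℕ) (a ω : Fin n → ℝ)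
    (σ τ : Equiv.Perm (Fin n))
    (hσ : Antitone (fun i => a (σ i))) (hτ : Antitone (fun i => ω (τ i)))
    (hmaj : ∀ k : ℕ, k ≤ n - 1 →
      ∑ i ∈ Finset.univ.filter (fun i : Fin n => (i : ℕ) < k), a (σ i) ≤
        ∑ i ∈ Finset.univ.filter (fun i : Fin n => (i : ℕ) < k), ω (τ i))
    (hsum : ∑ i, a i = ∑ i, ω i) :
    ∃ (M : Matrix (Fin n) (Fin n) ℝ) (hM : M.IsHermitian),
      (∀ i, M i i = a i) ∧
        ∃ π : Equiv.Perm (Fin n), ∀ i, hM.eigenvalues i = ω (π i) := by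
  have hsum' : ∑ i, a (σ i) = ∑ i, ω (τ i) := by rwa [Equiv.sum_comp, Equiv.sum_comp]
  have hpair : IsSchurHornPair a ω :=
    (isSchurHornPair_of_antitone_of_majorized hσ hτ hmaj hsum').of_comp_equiv σ τ
  obtain ⟨M, hM, hdiag, π, hπ⟩ := hpair.exists_isHermitian
  exact ⟨M, hM, congrFun hdiag, π, congrFun hπ⟩
end
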